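/- Suppose the activation σ : ℝ → ℝ is non-decreasing and convex, μ_w^i > 0 for all i = 1, …, L, and every intermediate activation h^i_j (for all i and j) is integrable. Then for every output coordinate l, E[h^L_l] ≥ (f_L ∘ f_{L-1} ∘ ⋯ ∘ f_1)(μ_x · μ_m), where f_i(x) = σ(n_{i-1} μ_w^i x + μ_b^i). Thus the expected output is lower-bounded by a quantity depending on the mask mean μ_m (Theorem 3). -/

import Mathlib

/-!
Induct over the layers. Since `W^i_{jk}` is independent of `h^{i-1}_k`, the pre-activation
`∑_k W^i_{jk} h^{i-1}_k + b^i_j` has mean `μ_w^i ∑_k E[h^{i-1}_k] + μ_b^i`, so Jensen's inequality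
for the convex `σ` gives `E[h^i_j] ≥ σ(μ_w^i ∑_k E[h^{i-1}_k] + μ_b^i)`; as `μ_w^i > 0` and `σ` is
monotone, the inductive bound `E[h^{i-1}_k] ≥ (f_{i-1} ∘ ⋯ ∘ f_1)(μ_x μ_m)` passes through `f_i`.
The independence holds because `h^{i-1}` is a.e. measurable with respect to the σ-algebra
generated by the inputs and the parameters of the earlier layers.
-/

open MeasureTheory ProbabilityTheory

/-- The composition `f_L ∘ ⋯ ∘ f_1` of the per-layer maps
`f_{i+1}(x) = σ (n i · μw i · x + μb i)` (0-based layer indexing):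
`layerComp σ n μw μb L x = (f_L ∘ ⋯ ∘ f_1) x`. -/
def layerComp (σ : ℝ → ℝ) (n : ℕ → ℕ) (μw μb : ℕ → ℝ) : ℕ → ℝ → ℝ
  | 0, x => x
  | i + 1, x => σ ((n i : ℝ) * μw i * layerComp σ n μw μb i x + μb i)

theorem ProbabilityTheory.iIndepFun.indepFun_of_aestronglyMeasurable_biSup
    {Ω ι γ : Type*} {mΩ : MeasurableSpace Ω} {μ : Measure Ω} {β : ι → Type*}
    [∀ i, MeasurableSpace (β i)] [TopologicalSpace γ] [TopologicalSpace.PseudoMetrizableSpace γ]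
    [MeasurableSpace γ] [BorelSpace γ] {F : ∀ i, Ω → β i}
    (hF : ∀ i, Measurable (F i)) (hind : iIndepFun F μ) {S : Set ι} {i : ι} (hi : i ∉ S)
    {X : Ω → γ}
    (hX : AEStronglyMeasurable[⨆ j ∈ S, MeasurableSpace.comap (F j) inferInstance] X μ) :
    IndepFun (F i) X μ := by
  obtain ⟨g, hg, hXg⟩ := hX
  have hsplit := indep_iSup_of_disjoint (fun j => (hF j).comap_le) hind.iIndep
    (Set.disjoint_singleton_left.mpr hi)
  have hFi : MeasurableSpace.comap (F i) inferInstance ≤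
      ⨆ j ∈ ({i} : Set ι), MeasurableSpace.comap (F j) inferInstance :=
    le_biSup (fun j => MeasurableSpace.comap (F j) inferInstance) (Set.mem_singleton i)
  have hgX : IndepFun (F i) g μ := by
    rw [IndepFun_iff_Indep]
    exact indep_of_indep_of_le_left (indep_of_indep_of_le_right hsplit hg.measurable.comap_le) hFi
  exact hgX.congr (ae_eq_refl _) hXg.symm

theorem MeasureTheory.AEStronglyMeasurable.fun_finsetSum {α ι M : Type*} [AddCommMonoid M]
    [TopologicalSpace M] [ContinuousAdd M] {m m₀ : MeasurableSpace α} {μ : Measure[m₀] α}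
    {f : ι → α → M} (s : Finset ι) (hf : ∀ i ∈ s, AEStronglyMeasurable[m] (f i) μ) :
    AEStronglyMeasurable[m] (fun a => ∑ i ∈ s, f i a) μ := by
  classical
  induction s using Finset.induction_on with
  | empty => simpa using aestronglyMeasurable_const
  | insert i s hi ih =>
    simp_rw [Finset.sum_insert hi]
    exact (hf i (Finset.mem_insert_self i s)).add
      (ih fun j hj => hf j (Finset.mem_insert_of_mem hj))

theorem ConvexOn.le_integral_comp_sum_mul_add {Ω ι : Type*} [Fintype ι] {mΩ : MeasurableSpace Ω}
    {μ : Measure Ω} [IsProbabilityMeasure μ] {σ : ℝ → ℝ} (hσ : ConvexOn ℝ Set.univ σ)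
    {w x : ι → Ω → ℝ} {c : Ω → ℝ} (hw : ∀ k, Integrable (w k) μ) (hx : ∀ k, Integrable (x k) μ)
    (hc : Integrable c μ) (hwx : ∀ k, IndepFun (w k) (x k) μ)
    (hσint : Integrable (fun ω => σ (∑ k, w k ω * x k ω + c ω)) μ) :
    σ (∑ k, (∫ ω, w k ω ∂μ) * (∫ ω, x k ω ∂μ) + ∫ ω, c ω ∂μ) ≤
      ∫ ω, σ (∑ k, w k ω * x k ω + c ω) ∂μ := by
  have hprod : ∀ k, Integrable (fun ω => w k ω * x k ω) μ := fun k =>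
    (hwx k).integrable_mul (hw k) (hx k)
  have hsum : Integrable (fun ω => ∑ k, w k ω * x k ω) μ :=
    integrable_finsetSum _ fun k _ => hprod k
  have hmean : ∫ ω, (∑ k, w k ω * x k ω + c ω) ∂μ =
      ∑ k, (∫ ω, w k ω ∂μ) * (∫ ω, x k ω ∂μ) + ∫ ω, c ω ∂μ := by
    rw [integral_add hsum hc, integral_finsetSum _ fun k _ => hprod k]
    congr 1
    exact Finset.sum_congr rfl fun k _ =>
      (hwx k).integral_mul_eq_mul_integral (hw k).1 (hx k).1
  rw [← hmean]
  exact hσ.map_integral_le (hσ.continuousOn isOpen_univ) isClosed_univ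
    (Filter.Eventually.of_forall fun _ => Set.mem_univ _) (hsum.add hc) hσint

/-- Indices of the network's random variables: weights, biases, features `h̃⁰`, masks. -/
abbrev NetIndex (L : ℕ) (n : ℕ → ℕ) : Type :=
  ((Σ i : Fin L, Fin (n ((i : ℕ) + 1)) × Fin (n (i : ℕ))) ⊕ (Σ i : Fin L, Fin (n ((i : ℕ) + 1)))) ⊕
    (Fin (n 0) ⊕ Fin (n 0))

def netData {Ω : Type*} (L : ℕ) {n : ℕ → ℕ} (W : (i : ℕ) → Fin (n (i + 1)) → Fin (n i) → Ω → ℝ)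
    (b : (i : ℕ) → Fin (n (i + 1)) → Ω → ℝ) (ht m : Fin (n 0) → Ω → ℝ) :
    NetIndex L n → Ω → ℝ :=
  Sum.elim (Sum.elim (fun p => W p.1 p.2.1 p.2.2) (fun p => b p.1 p.2)) (Sum.elim ht m)

/-- The first layer whose activations depend on the variable with this index. -/
def NetIndex.depth {L : ℕ} {n : ℕ → ℕ} : NetIndex L n → ℕ
  | .inl (.inl p) => p.1 + 1
  | .inl (.inr p) => p.1 + 1
  | .inr _ => 0

abbrev sigmaUpToDepth {Ω : Type*} {L : ℕ} {n : ℕ → ℕ} (G : NetIndex L n → Ω → ℝ) (i : ℕ) :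
    MeasurableSpace Ω :=
  ⨆ p ∈ {p : NetIndex L n | p.depth ≤ i}, MeasurableSpace.comap (G p) inferInstance

section Network

variable {Ω : Type*} {mΩ : MeasurableSpace Ω} {μ : Measure Ω} {L : ℕ} {n : ℕ → ℕ}
  {W : (i : ℕ) → Fin (n (i + 1)) → Fin (n i) → Ω → ℝ} {b : (i : ℕ) → Fin (n (i + 1)) → Ω → ℝ}
  {ht m : Fin (n 0) → Ω → ℝ} {h : (i : ℕ) → Fin (n i) → Ω → ℝ} {σ : ℝ → ℝ}

theorem sigmaUpToDepth_mono (G : NetIndex L n → Ω → ℝ) : Monotone (sigmaUpToDepth G) :=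
  fun _ _ hij => biSup_mono fun _ hp => le_trans hp hij

theorem aestronglyMeasurable_netData {G : NetIndex L n → Ω → ℝ}
    (hG : ∀ p, netData L W b ht m p =ᵐ[μ] G p) {p : NetIndex L n} {i : ℕ} (hp : p.depth ≤ i) :
    AEStronglyMeasurable[sigmaUpToDepth G i] (netData L W b ht m p) μ := by
  have hGp : Measurable[sigmaUpToDepth G i] (G p) :=
    (comap_measurable (G p)).mono
      (le_biSup (fun q => MeasurableSpace.comap (G q) inferInstance) hp) le_rfl
  exact ⟨G p, hGp.stronglyMeasurable, hG p⟩

theorem aestronglyMeasurable_activation (hσ : Continuous σ) {G : NetIndex L n → Ω → ℝ}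
    (hG : ∀ p, netData L W b ht m p =ᵐ[μ] G p)
    (h0 : ∀ (k : Fin (n 0)) (ω : Ω), h 0 k ω = ht k ω * m k ω)
    (hrec : ∀ i < L, ∀ (j : Fin (n (i + 1))) (ω : Ω),
      h (i + 1) j ω = σ (∑ k, W i j k ω * h i k ω + b i j ω)) :
    ∀ i ≤ L, ∀ k, AEStronglyMeasurable[sigmaUpToDepth G i] (h i k) μ := by
  intro i
  induction i with
  | zero =>
    intro _ k
    rw [show h 0 k = ht k * m k from funext (h0 k)]
    exact (aestronglyMeasurable_netData (p := .inr (.inl k)) hG le_rfl).mul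
      (aestronglyMeasurable_netData (p := .inr (.inr k)) hG le_rfl)
  | succ i ih =>
    intro hi j
    have hiL : i < L := hi
    rw [show h (i + 1) j = _ from funext (hrec i hiL j)]
    have hsum : AEStronglyMeasurable[sigmaUpToDepth G (i + 1)]
        (fun ω => ∑ k, W i j k ω * h i k ω) μ :=
      AEStronglyMeasurable.fun_finsetSum _ fun k _ =>
        (aestronglyMeasurable_netData (p := .inl (.inl ⟨⟨i, hiL⟩, (j, k)⟩)) hG le_rfl).mul
          ((ih hiL.le k).mono (sigmaUpToDepth_mono G i.le_succ))
    exact hσ.comp_aestronglyMeasurable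
      (hsum.add (aestronglyMeasurable_netData (p := .inl (.inr ⟨⟨i, hiL⟩, j⟩)) hG le_rfl))

theorem indepFun_weight_activation (hindep : iIndepFun (netData L W b ht m) μ)
    (hdata : ∀ p, AEStronglyMeasurable (netData L W b ht m p) μ) (hσ : Continuous σ)
    (h0 : ∀ (k : Fin (n 0)) (ω : Ω), h 0 k ω = ht k ω * m k ω)
    (hrec : ∀ i < L, ∀ (j : Fin (n (i + 1))) (ω : Ω),
      h (i + 1) j ω = σ (∑ k, W i j k ω * h i k ω + b i j ω)) :
    ∀ i < L, ∀ j k, IndepFun (W i j k) (h i k) μ := by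
  intro i hi j k
  -- independence of σ-algebras needs measurable generators, so pass to measurable versions
  set G := fun p => (hdata p).mk _
  have hG : ∀ p, netData L W b ht m p =ᵐ[μ] G p := fun p => (hdata p).ae_eq_mk
  have hGmeas : ∀ p, Measurable (G p) := fun p => (hdata p).stronglyMeasurable_mk.measurable
  have hind := (hindep.congr hG).indepFun_of_aestronglyMeasurable_biSup hGmeas
    (i := .inl (.inl ⟨⟨i, hi⟩, (j, k)⟩)) (S := {p | p.depth ≤ i}) (by simp [NetIndex.depth])
    (aestronglyMeasurable_activation hσ hG h0 hrec i hi.le k)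
  exact hind.congr (hG _).symm (ae_eq_refl _)

theorem layerComp_le_integral_activation [IsProbabilityMeasure μ] (hσmono : Monotone σ)
    (hσconv : ConvexOn ℝ Set.univ σ) {μw μb : ℕ → ℝ} (hμw : ∀ i < L, 0 ≤ μw i)
    (hWint : ∀ i < L, ∀ j k, Integrable (W i j k) μ)
    (hWmean : ∀ i < L, ∀ j k, ∫ ω, W i j k ω ∂μ = μw i)
    (hbint : ∀ i < L, ∀ j, Integrable (b i j) μ)
    (hbmean : ∀ i < L, ∀ j, ∫ ω, b i j ω ∂μ = μb i)
    (hrec : ∀ i < L, ∀ (j : Fin (n (i + 1))) (ω : Ω),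
      h (i + 1) j ω = σ (∑ k, W i j k ω * h i k ω + b i j ω))
    (hint : ∀ i ≤ L, ∀ j, Integrable (h i j) μ)
    (hWh : ∀ i < L, ∀ j k, IndepFun (W i j k) (h i k) μ)
    {x : ℝ} (hx : ∀ k, x ≤ ∫ ω, h 0 k ω ∂μ) :
    ∀ i ≤ L, ∀ k, layerComp σ n μw μb i x ≤ ∫ ω, h i k ω ∂μ := by
  intro i
  induction i with
  | zero => exact fun _ => hx
  | succ i ih =>
    intro hi j
    have hiL : i < L := hi
    set c := layerComp σ n μw μb i x
    have hpre : (n i : ℝ) * μw i * c + μb i ≤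
        ∑ k, (∫ ω, W i j k ω ∂μ) * (∫ ω, h i k ω ∂μ) + ∫ ω, b i j ω ∂μ := by
      simp only [hWmean i hiL j, hbmean i hiL j]
      calc (n i : ℝ) * μw i * c + μb i = ∑ _k : Fin (n i), μw i * c + μb i := by
            simp [mul_assoc]
        _ ≤ ∑ k, μw i * ∫ ω, h i k ω ∂μ + μb i := by
            gcongr with k
            exacts [hμw i hiL, ih hiL.le k]
    have hhrec : h (i + 1) j = fun ω => σ (∑ k, W i j k ω * h i k ω + b i j ω) :=
      funext (hrec i hiL j)
    calc layerComp σ n μw μb (i + 1) x = σ ((n i : ℝ) * μw i * c + μb i) := rfl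
      _ ≤ σ (∑ k, (∫ ω, W i j k ω ∂μ) * (∫ ω, h i k ω ∂μ) + ∫ ω, b i j ω ∂μ) := hσmono hpre
      _ ≤ ∫ ω, σ (∑ k, W i j k ω * h i k ω + b i j ω) ∂μ :=
        hσconv.le_integral_comp_sum_mul_add (hWint i hiL j) (hint i hiL.le) (hbint i hiL j)
          (hWh i hiL j) (hhrec ▸ hint (i + 1) hi j)
      _ = ∫ ω, h (i + 1) j ω ∂μ := by rw [hhrec]

end Network

theorem vsp_convex_network_lower_bound_general
    {Ω : Type*} [MeasureSpace Ω] [IsProbabilityMeasure (ℙ : Measure Ω)]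
    (L : ℕ) (n : ℕ → ℕ)
    (σ : ℝ → ℝ) (hσmono : Monotone σ) (hσconv : ConvexOn ℝ Set.univ σ)
    (W : (i : ℕ) → Fin (n (i + 1)) → Fin (n i) → Ω → ℝ)
    (b : (i : ℕ) → Fin (n (i + 1)) → Ω → ℝ)
    (ht m : Fin (n 0) → Ω → ℝ)
    (μw μb : ℕ → ℝ) (μx μm : ℝ)
    (hμw : ∀ i < L, 0 < μw i)
    (hWint : ∀ i < L, ∀ (j : Fin (n (i + 1))) (k : Fin (n i)), Integrable (W i j k))
    (hWmean : ∀ i < L, ∀ (j : Fin (n (i + 1))) (k : Fin (n i)), ∫ ω, W i j k ω = μw i)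
    (hbint : ∀ i < L, ∀ (j : Fin (n (i + 1))), Integrable (b i j))
    (hbmean : ∀ i < L, ∀ (j : Fin (n (i + 1))), ∫ ω, b i j ω = μb i)
    (hhint : ∀ k, Integrable (ht k)) (hhmean : ∀ k, ∫ ω, ht k ω = μx)
    (hmint : ∀ k, Integrable (m k)) (hmmean : ∀ k, ∫ ω, m k ω = μm)
    (hindep : iIndepFun
      (Sum.elim
        (Sum.elim
          (fun p : Σ i : Fin L, Fin (n ((i : ℕ) + 1)) × Fin (n (i : ℕ)) =>
            W p.1 p.2.1 p.2.2)
          (fun p : Σ i : Fin L, Fin (n ((i : ℕ) + 1)) => b p.1 p.2))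
        (Sum.elim ht m)) ℙ)
    (h : (i : ℕ) → Fin (n i) → Ω → ℝ)
    (h0 : ∀ (k : Fin (n 0)) (ω : Ω), h 0 k ω = ht k ω * m k ω)
    (hrec : ∀ i < L, ∀ (j : Fin (n (i + 1))) (ω : Ω),
      h (i + 1) j ω = σ (∑ k, W i j k ω * h i k ω + b i j ω))
    (hint : ∀ i ≤ L, ∀ (j : Fin (n i)), Integrable (h i j)) :
    ∀ l : Fin (n L), ∫ ω, h L l ω ≥ layerComp σ n μw μb L (μx * μm) := by
  intro l
  have hσcont : Continuous σ := continuousOn_univ.mp (hσconv.continuousOn isOpen_univ)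
  have hdata : ∀ p, AEStronglyMeasurable (netData L W b ht m p) ℙ := by
    rintro ((⟨i, j, k⟩ | ⟨i, j⟩) | (k | k))
    exacts [(hWint i i.2 j k).1, (hbint i i.2 j).1, (hhint k).1, (hmint k).1]
  have hinput : ∀ k, μx * μm ≤ ∫ ω, h 0 k ω := by
    intro k
    have hind : IndepFun (ht k) (m k) ℙ :=
      hindep.indepFun (i := .inr (.inl k)) (j := .inr (.inr k)) (by simp)
    rw [show h 0 k = ht k * m k from funext (h0 k),
      hind.integral_mul_eq_mul_integral (hhint k).1 (hmint k).1, hhmean, hmmean]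
  have hWh := indepFun_weight_activation hindep hdata hσcont h0 hrec
  exact layerComp_le_integral_activation hσmono hσconv (fun i hi => (hμw i hi).le) hWint hWmean
    hbint hbmean hrec hint hWh hinput L le_rfl l

/-- **Theorem 3 (lower bound for non-decreasing convex activations).**
An `L`-layer network with a non-decreasing convex activation `σ` is applied to
the zero-imputed input `h⁰ₖ = h̃⁰ₖ · mₖ`.  Layer `i` (for `0 ≤ i < L`) has
weight matrix `W i` with integrable mean-`μw i` entries where `μw i > 0`, and
bias `b i` with integrable mean-`μb i` coordinates; features have mean `μx`,
masks mean `μm`, all weights, biases, features and masks are mutually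
independent, and every intermediate activation `h i j` is integrable.  Then for
every output coordinate, `E[h L l] ≥ (f_L ∘ ⋯ ∘ f_1)(μx · μm)` where
`f_{i+1}(x) = σ (n i · μw i · x + μb i)`. -/
theorem vsp_convex_network_lower_bound
    {Ω : Type*} [MeasureSpace Ω] [IsProbabilityMeasure (ℙ : Measure Ω)]
    (L : ℕ) (hL : 1 ≤ L) (n : ℕ → ℕ) (hn : ∀ i ≤ L, 1 ≤ n i)
    (σ : ℝ → ℝ) (hσmono : Monotone σ) (hσconv : ConvexOn ℝ Set.univ σ)
    (W : (i : ℕ) → Fin (n (i + 1)) → Fin (n i) → Ω → ℝ)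
    (b : (i : ℕ) → Fin (n (i + 1)) → Ω → ℝ)
    (ht m : Fin (n 0) → Ω → ℝ)
    (μw μb : ℕ → ℝ) (μx μm : ℝ)
    (hμw : ∀ i < L, 0 < μw i)
    (hWint : ∀ i < L, ∀ (j : Fin (n (i + 1))) (k : Fin (n i)), Integrable (W i j k))
    (hWmean : ∀ i < L, ∀ (j : Fin (n (i + 1))) (k : Fin (n i)), ∫ ω, W i j k ω = μw i)
    (hbint : ∀ i < L, ∀ (j : Fin (n (i + 1))), Integrable (b i j))
    (hbmean : ∀ i < L, ∀ (j : Fin (n (i + 1))), ∫ ω, b i j ω = μb i)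
    (hhint : ∀ k, Integrable (ht k)) (hhmean : ∀ k, ∫ ω, ht k ω = μx)
    (hmint : ∀ k, Integrable (m k)) (hmmean : ∀ k, ∫ ω, m k ω = μm)
    (hindep : iIndepFun
      (Sum.elim
        (Sum.elim
          (fun p : Σ i : Fin L, Fin (n ((i : ℕ) + 1)) × Fin (n (i : ℕ)) =>
            W p.1 p.2.1 p.2.2)
          (fun p : Σ i : Fin L, Fin (n ((i : ℕ) + 1)) => b p.1 p.2))
        (Sum.elim ht m)) ℙ)
    (h : (i : ℕ) → Fin (n i) → Ω → ℝ)
    (h0 : ∀ (k : Fin (n 0)) (ω : Ω), h 0 k ω = ht k ω * m k ω)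
    (hrec : ∀ i < L, ∀ (j : Fin (n (i + 1))) (ω : Ω),
      h (i + 1) j ω = σ (∑ k, W i j k ω * h i k ω + b i j ω))
    (hint : ∀ i ≤ L, ∀ (j : Fin (n i)), Integrable (h i j)) :
    ∀ l : Fin (n L), ∫ ω, h L l ω ≥ layerComp σ n μw μb L (μx * μm) :=
  vsp_convex_network_lower_bound_general L n σ hσmono hσconv W b ht m μw μb μx μm hμw hWint hWmean
    hbint hbmean hhint hhmean hmint hmmean hindep h h0 hrec hint
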